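/- Let S_n ∈ ℂ[u] be the Chebyshev polynomials of the second kind, defined by S_0 = 1, S_1 = u, and S_{n+1} = u·S_n − S_{n−1}. Then for every n ≥ 0, the symmetric Laurent polynomial S_n(X + X⁻¹) = Σ_{k=0}^{n} X^{n−2k} is an eigenfunction of the Macdonald operator at the specialization t = −q²: L_{q,−q²}(S_n(X + X⁻¹)) = −(q^{2n+2} + q^{−2n−2})·S_n(X + X⁻¹). (That is, at t = −q² the Macdonald polynomials of type A_1 specialize to the Chebyshev polynomials S_n.) -/

import Mathlib

/-!
Multiplying by `X⁻¹ - X` turns `S_n(X + X⁻¹)` into `X^{-n-1} - X^{n+1}` (the Weyl character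
formula for `SL₂`), which both identifies it with `∑ₖ X^{n-2k}` and makes the right-hand side
explicit. At `t = -q²` the operator sends `X^m` to `c_{m+1} X^{m+1} - c_{m-1} X^{m-1}` with
`c_j = q^{2j} + q^{-2j}`, so on `∑ₖ X^{n-2k}` it telescopes to
`c_{n+1} X^{n+1} - c_{-n-1} X^{-n-1} = c_{n+1} (X^{n+1} - X^{-n-1})`.
-/

noncomputable section

/-- The Chebyshev polynomials of the second kind: `S 0 = 1`, `S 1 = u`,
`S (n+2) = u·S (n+1) - S n`. -/
def chebS : ℕ → Polynomial ℂ
  | 0 => 1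
  | 1 => Polynomial.X
  | n + 2 => Polynomial.X * chebS (n + 1) - chebS n

open LaurentPolynomial Finset

theorem Finset.sum_range_sub_step_two {M : Type*} [AddCommGroup M] (f : ℤ → M) (n : ℕ) :
    ∑ k ∈ range (n + 1), (f (n - 2 * k + 1) - f (n - 2 * k - 1)) =
      f (n + 1) - f (-(n + 1)) := by
  convert sum_range_sub' (fun k : ℕ ↦ f (n - 2 * k + 1)) (n + 1) using 3 with k <;>
    push_cast <;> ring_nf

theorem T_neg_one_sub_T_one_ne_zero {R : Type*} [Ring R] [Nontrivial R] :
    (T (-1) - T 1 : R[T;T⁻¹]) ≠ 0 := by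
  rw [sub_ne_zero]
  intro h
  simpa using congrArg LaurentPolynomial.degree h

theorem T_neg_one_sub_T_one_mul_sum {R : Type*} [CommRing R] (n : ℕ) :
    (T (-1) - T 1 : R[T;T⁻¹]) * ∑ k ∈ range (n + 1), T (n - 2 * k) =
      T (-(n + 1)) - T (n + 1) := by
  have key (m : ℤ) : (T (-1) - T 1 : R[T;T⁻¹]) * T m = -T (m + 1) - -T (m - 1) := by
    rw [sub_mul, ← T_add, ← T_add, neg_sub_neg, add_comm, ← sub_eq_add_neg]
    abel_nf
  rw [mul_sum]
  simp only [key]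
  rw [sum_range_sub_step_two (fun m ↦ -(T m : R[T;T⁻¹]))]
  abel

theorem T_neg_one_sub_T_one_mul_aeval_chebS (n : ℕ) :
    (T (-1) - T 1 : ℂ[T;T⁻¹]) * Polynomial.aeval (T 1 + T (-1)) (chebS n) =
      T (-(n + 1)) - T (n + 1) := by
  induction n using chebS.induct with
  | case1 => simp [chebS]
  | case2 =>
    simp only [chebS, Polynomial.aeval_X, sub_mul, mul_add, ← T_add]
    norm_num
  | case3 n ih₁ ih₂ =>
    rw [chebS, map_sub, map_mul, Polynomial.aeval_X, mul_sub, mul_left_comm, ih₁, ih₂]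
    simp only [add_mul, mul_sub, ← T_add]
    push_cast
    ring_nf

theorem aeval_chebS (n : ℕ) :
    Polynomial.aeval (T 1 + T (-1) : ℂ[T;T⁻¹]) (chebS n) =
      ∑ k ∈ range (n + 1), T (n - 2 * k) :=
  mul_left_cancel₀ T_neg_one_sub_T_one_ne_zero <|
    (T_neg_one_sub_T_one_mul_aeval_chebS n).trans (T_neg_one_sub_T_one_mul_sum n).symm

theorem macdonald_T_at_neg_sq {K : Type*} [Field K] {q : K} (hq : q ≠ 0) (m : ℤ) :
    ((-q ^ 2) • T (-1) - (-q ^ 2)⁻¹ • T 1) * (q ^ (-2 * m) • T m : K[T;T⁻¹]) +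
        ((-q ^ 2)⁻¹ • T (-1) - (-q ^ 2) • T 1) * (q ^ (2 * m) • T m) =
      (q ^ (2 * (m + 1)) + q ^ (-2 * (m + 1))) • T (m + 1) -
        (q ^ (2 * (m - 1)) + q ^ (-2 * (m - 1))) • T (m - 1) := by
  have hT (a : K) (k : ℤ) : (a • T k : K[T;T⁻¹]) * T m = a • T (m + k) := by
    rw [smul_mul_assoc, ← T_add, add_comm]
  simp only [mul_smul_comm, sub_mul, hT, ← sub_eq_add_neg]
  have hadd (k : ℤ) : q ^ (k + 2) = q ^ k * q ^ 2 := by rw [zpow_add₀ hq]; norm_cast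
  have hsub (k : ℤ) : q ^ (k - 2) = q ^ k * (q ^ 2)⁻¹ := by
    rw [zpow_sub₀ hq, div_eq_mul_inv]; norm_cast
  rw [show 2 * (m + 1) = 2 * m + 2 by ring, show -2 * (m + 1) = -2 * m - 2 by ring,
    show 2 * (m - 1) = 2 * m - 2 by ring, show -2 * (m - 1) = -2 * m + 2 by ring,
    hadd, hadd, hsub, hsub]
  module

open LaurentPolynomial in
/-- At the specialization `t = -q²`, the Macdonald polynomials of type `A₁` specialize to the
Chebyshev polynomials of the second kind: `S_n(X + X⁻¹) = Σ_{k=0}^{n} X^{n-2k}` and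
`L_{q,-q²}(S_n(X + X⁻¹)) = -(q^{2n+2} + q^{-2n-2})·S_n(X + X⁻¹)` (the eigen-equation is
stated multiplied through by `X⁻¹ - X`; `yhm : f(X) ↦ f(q⁻²X)`, `yhp : f(X) ↦ f(q²X)`). -/
theorem chebyshev_eigenfunction_macdonald (q : ℂ) (hq : q ≠ 0)
    (yhm yhp : Module.End ℂ (LaurentPolynomial ℂ))
    (hym : ∀ n : ℤ, yhm (T n) = q ^ (-2 * n) • T n)
    (hyp : ∀ n : ℤ, yhp (T n) = q ^ (2 * n) • T n) :
    ∀ n : ℕ,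
      Polynomial.aeval (T 1 + T (-1) : LaurentPolynomial ℂ) (chebS n) =
        ∑ k ∈ Finset.range (n + 1), T ((n : ℤ) - 2 * (k : ℤ)) ∧
      ((-q ^ 2) • T (-1) - (-q ^ 2)⁻¹ • T 1) *
            yhm (Polynomial.aeval (T 1 + T (-1) : LaurentPolynomial ℂ) (chebS n)) +
          ((-q ^ 2)⁻¹ • T (-1) - (-q ^ 2) • T 1) *
            yhp (Polynomial.aeval (T 1 + T (-1) : LaurentPolynomial ℂ) (chebS n)) =
        (-(q ^ (2 * (n : ℤ) + 2) + q ^ (-2 * (n : ℤ) - 2))) •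
          ((T (-1) - T 1) *
            Polynomial.aeval (T 1 + T (-1) : LaurentPolynomial ℂ) (chebS n)) := by
  intro n
  refine ⟨aeval_chebS n, ?_⟩
  rw [T_neg_one_sub_T_one_mul_aeval_chebS, aeval_chebS, map_sum, map_sum, mul_sum, mul_sum,
    ← sum_add_distrib]
  simp only [hym, hyp, macdonald_T_at_neg_sq hq]
  refine (sum_range_sub_step_two (fun j ↦ (q ^ (2 * j) + q ^ (-2 * j)) • T j) n).trans ?_
  rw [show -2 * (-((n : ℤ) + 1)) = 2 * n + 2 by ring,
    show 2 * (-((n : ℤ) + 1)) = -2 * n - 2 by ring,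
    show 2 * ((n : ℤ) + 1) = 2 * n + 2 by ring, show -2 * ((n : ℤ) + 1) = -2 * n - 2 by ring]
  module
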